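/- Let $A_k = \sum_{n \geq 1,\ s_2(n)=k} 1/n$. Then for $k \geq 2$, $A_k = 2 \sum_{n \geq 0,\ s_2(n) = k-1} 1/(2n+1)$. -/

import Mathlib

open Finset

private noncomputable def fk (k n : ℕ) : ℝ := if (Nat.digits 2 n).sum = k then (1 : ℝ) / n else 0

private lemma s2_two_mul (m : ℕ) :
    (Nat.digits 2 (2 * m)).sum = (Nat.digits 2 m).sum := by
  rcases Nat.eq_zero_or_pos m with h | h
  · simp [h]
  · rw [Nat.digits_def' (by norm_num : 1 < 2) (by omega)]
    simp [Nat.mul_div_cancel_left m (by norm_num : 0 < 2), Nat.mul_mod_right]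

private lemma s2_odd (m : ℕ) :
    (Nat.digits 2 (2 * m + 1)).sum = (Nat.digits 2 m).sum + 1 := by
  rw [Nat.digits_def' (by norm_num : 1 < 2) (by omega)]
  have h1 : (2 * m + 1) % 2 = 1 := by omega
  have h2 : (2 * m + 1) / 2 = m := by omega
  rw [h1, h2]
  simp [Nat.add_comm]

private lemma s2_pos (n : ℕ) (hn : n ≠ 0) : (Nat.digits 2 n).sum ≠ 0 := by
  induction n using Nat.strong_induction_on with
  | _ n ih =>
    rcases Nat.even_or_odd n with ⟨m, hm⟩ | ⟨m, hm⟩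
    · subst hm
      rw [← two_mul, s2_two_mul]
      exact ih m (by omega) (by omega)
    · subst hm
      rw [s2_odd]
      omega

private lemma fk_nonneg (k n : ℕ) : 0 ≤ fk k n := by
  unfold fk; positivity

private lemma fk_even (k m : ℕ) : fk k (2 * m) = fk k m / 2 := by
  unfold fk
  rw [s2_two_mul]
  split
  · push_cast; rcases Nat.eq_zero_or_pos m with h | h
    · simp [h]
    · have : (0:ℝ) < m := by exact_mod_cast h
      field_simp
  · simp

private lemma range_two_mul_sum (h : ℕ → ℝ) (N : ℕ) :
    ∑ n ∈ range (2 * N), h n = ∑ m ∈ range N, h (2 * m) + ∑ m ∈ range N, h (2 * m + 1) := by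
  induction N with
  | zero => simp
  | succ N ih =>
      have : 2 * (N + 1) = (2 * N + 1) + 1 := by ring
      rw [this, Finset.sum_range_succ, Finset.sum_range_succ,
        Finset.sum_range_succ (fun m => h (2 * m)), Finset.sum_range_succ (fun m => h (2 * m + 1)), ih]
      ring

private lemma fk_partial_bound (k : ℕ) : ∀ M : ℕ, ∑ n ∈ range (2 ^ M), fk k n ≤ 2 * k := by
  induction k with
  | zero =>
      intro M
      have hz : ∀ n, fk 0 n = 0 := by
        intro n
        unfold fk
        split
        · rename_i h
          rcases Nat.eq_zero_or_pos n with h0 | h0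
          · simp [h0]
          · exact absurd h (s2_pos n (by omega))
        · rfl
      simp [hz]
  | succ k ihk =>
      intro M
      induction M with
      | zero => simp [fk]; positivity
      | succ M ihM =>
          have hpow : (2 : ℕ) ^ (M + 1) = 2 * 2 ^ M := by ring
          have heven : ∑ m ∈ range (2 ^ M), fk (k + 1) (2 * m)
              = (∑ m ∈ range (2 ^ M), fk (k + 1) m) / 2 := by
            rw [Finset.sum_div]
            exact Finset.sum_congr rfl fun m _ => fk_even (k + 1) m
          have hodd : ∑ m ∈ range (2 ^ M), fk (k + 1) (2 * m + 1)
              ≤ 1 + (∑ m ∈ range (2 ^ M), fk k m) / 2 := by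
            have hterm : ∀ m ∈ range (2 ^ M),
                fk (k + 1) (2 * m + 1) ≤ (if m = 0 then (1 : ℝ) else 0) + fk k m / 2 := by
              intro m _
              rcases Nat.eq_zero_or_pos m with h0 | h0
              · subst h0
                have h1 : fk (k + 1) (2 * 0 + 1) ≤ 1 := by
                  unfold fk; split <;> norm_num
                have h2 : (0:ℝ) ≤ fk k 0 := fk_nonneg k 0
                rw [if_pos rfl]
                linarith
              · have hm : m ≠ 0 := by omega
                unfold fk
                rw [s2_odd]
                simp only [if_neg hm, zero_add]
                by_cases hs : (Nat.digits 2 m).sum = k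
                · rw [if_pos (by omega), if_pos hs]
                  rw [div_div]
                  have hm1 : (1:ℝ) ≤ m := by exact_mod_cast h0
                  apply one_div_le_one_div_of_le (by positivity)
                  push_cast; linarith
                · rw [if_neg (by omega), if_neg hs]
                  simp
            calc ∑ m ∈ range (2 ^ M), fk (k + 1) (2 * m + 1)
                ≤ ∑ m ∈ range (2 ^ M), ((if m = 0 then (1 : ℝ) else 0) + fk k m / 2) :=
                  Finset.sum_le_sum hterm
              _ = (∑ m ∈ range (2 ^ M), (if m = 0 then (1 : ℝ) else 0))
                    + (∑ m ∈ range (2 ^ M), fk k m) / 2 := by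
                  rw [Finset.sum_add_distrib, Finset.sum_div]
              _ ≤ 1 + (∑ m ∈ range (2 ^ M), fk k m) / 2 := by
                  gcongr
                  rw [Finset.sum_ite_eq' (range (2 ^ M)) 0 (fun _ => (1:ℝ))]
                  split <;> norm_num
          have hk' := ihk M
          rw [hpow, range_two_mul_sum, heven]
          push_cast
          push_cast at ihM hk'
          linarith

private lemma fk_summable (k : ℕ) : Summable (fk k) := by
  apply summable_of_sum_range_le (fk_nonneg k)
  intro n
  calc ∑ i ∈ range n, fk k i ≤ ∑ i ∈ range (2 ^ n), fk k i := by
        apply Finset.sum_le_sum_of_subset_of_nonneg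
        · exact Finset.range_subset_range.2 (Nat.le_of_lt (Nat.lt_two_pow_self (n := n)))
        · intro i _ _; exact fk_nonneg k i
    _ ≤ 2 * k := fk_partial_bound k n

theorem kempner_A_odd_split (k : ℕ) (hk : 2 ≤ k) :
    (∑' n : ℕ, if (Nat.digits 2 n).sum = k then (1 : ℝ) / n else 0)
      = 2 * ∑' n : ℕ, if (Nat.digits 2 n).sum = k - 1 then (1 : ℝ) / (2 * n + 1) else 0 := by
  have hsum : Summable (fk k) := fk_summable k
  have h2inj : Function.Injective (fun m : ℕ => 2 * m) := fun a b h => by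
    dsimp only at h; omega
  have hoinj : Function.Injective (fun m : ℕ => 2 * m + 1) := fun a b h => by
    dsimp only at h; omega
  have he : Summable (fun m => fk k (2 * m)) := hsum.comp_injective h2inj
  have ho : Summable (fun m => fk k (2 * m + 1)) := hsum.comp_injective hoinj
  have hsplit := tsum_even_add_odd he ho
  have heven : ∑' m, fk k (2 * m) = (∑' m, fk k m) / 2 := by
    rw [← tsum_div_const]
    exact tsum_congr fun m => fk_even k m
  have hodd : ∑' m, fk k (2 * m + 1)
      = ∑' n : ℕ, if (Nat.digits 2 n).sum = k - 1 then (1 : ℝ) / (2 * n + 1) else 0 := by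
    apply tsum_congr
    intro m
    unfold fk
    rw [s2_odd]
    have hiff : (Nat.digits 2 m).sum + 1 = k ↔ (Nat.digits 2 m).sum = k - 1 := by omega
    rw [if_congr hiff rfl rfl]
    congr 1
    push_cast
    ring_nf
  have hL : (∑' n : ℕ, if (Nat.digits 2 n).sum = k then (1 : ℝ) / n else 0) = ∑' m, fk k m :=
    tsum_congr fun n => rfl
  rw [hL]
  rw [heven, hodd] at hsplit
  linarith
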